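/- arXiv:1705.07160 — 2 statements merged into one kernel-verified Lean document; each statement's English description precedes it below -/
import Mathlib

section
/- Let d ≥ 3, n = (n₁,…,n_d) with each n_j ≥ 1, and F = ℝ or ℂ. Then α(n,F)·β(n,F) = 1. -/
/-!
The nuclear and spectral norms are dual to each other for the pairing `tinner`. Expanding `T`
into rank-one terms gives `‖⟨T, Y⟩‖ ≤ ‖T‖₁ ‖Y‖_∞`; conversely, separating `T` from the closed
convex nuclear ball by Hahn–Banach yields `Y` with `‖Y‖_∞ ≤ 1` and `⟨T, Y⟩` close to `‖T‖₁`
(the nuclear norm is convex, hence continuous in finite dimension). The first inequality with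
`Y = T` gives `1 ≤ ‖T‖₁ ‖T‖_∞ ≤ α ‖T‖_∞` on the unit sphere, so `1/α ≤ β`; the second gives
`‖T‖₁ ≤ sup {‖Y‖ : ‖Y‖_∞ ≤ 1} ≤ 1/β`, so `α ≤ 1/β`.
-/

noncomputable section


/-- The Euclidean norm of a vector in `𝕜^k`. -/
def vnorm {𝕜 : Type*} [RCLike 𝕜] {k : ℕ} (x : Fin k → 𝕜) : ℝ :=
  Real.sqrt (∑ i, ‖x i‖ ^ 2)

/-- The rank-one tensor `x₁ ⊗ ⋯ ⊗ x_d`. -/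
def rankOne {𝕜 : Type*} [RCLike 𝕜] {d : ℕ} {n : Fin d → ℕ}
    (x : ∀ j, Fin (n j) → 𝕜) : (∀ j, Fin (n j)) → 𝕜 :=
  fun i => ∏ j, x j (i j)

/-- The standard inner product `⟨T, Y⟩ = ∑ tᵢ · conj yᵢ` of tensors. -/
def tinner {𝕜 : Type*} [RCLike 𝕜] {d : ℕ} {n : Fin d → ℕ}
    (T Y : (∀ j, Fin (n j)) → 𝕜) : 𝕜 :=
  ∑ i, T i * (starRingEnd 𝕜) (Y i)

/-- The Hilbert–Schmidt norm of a tensor. -/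
def hsNorm {𝕜 : Type*} [RCLike 𝕜] {d : ℕ} {n : Fin d → ℕ}
    (T : (∀ j, Fin (n j)) → 𝕜) : ℝ :=
  Real.sqrt (∑ i, ‖T i‖ ^ 2)

/-- The spectral norm of a tensor:
`max {|⟨T, x₁⊗⋯⊗x_d⟩| : ‖x_j‖ = 1 for all j}`. -/
def specNorm {𝕜 : Type*} [RCLike 𝕜] {d : ℕ} {n : Fin d → ℕ}
    (T : (∀ j, Fin (n j)) → 𝕜) : ℝ :=
  sSup {r : ℝ | ∃ x : ∀ j, Fin (n j) → 𝕜, (∀ j, vnorm (x j) = 1) ∧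
    r = ‖tinner T (rankOne x)‖}

/-- The nuclear norm of a tensor:
`min {∑ᵢ ∏ⱼ ‖x_{i,j}‖ : T = ∑ᵢ x_{i,1}⊗⋯⊗x_{i,d}}`. -/
def nucNorm {𝕜 : Type*} [RCLike 𝕜] {d : ℕ} {n : Fin d → ℕ}
    (T : (∀ j, Fin (n j)) → 𝕜) : ℝ :=
  sInf {r : ℝ | ∃ (m : ℕ) (x : Fin m → ∀ j, Fin (n j) → 𝕜),
    T = (∑ i, rankOne (x i)) ∧ r = ∑ i, ∏ j, vnorm (x i j)}

/-- `α(n, 𝕜)`: the maximal nuclear norm of a tensor of Hilbert–Schmidt norm one. -/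
def alphaN (𝕜 : Type*) [RCLike 𝕜] (d : ℕ) (n : Fin d → ℕ) : ℝ :=
  sSup {r : ℝ | ∃ T : (∀ j, Fin (n j)) → 𝕜, hsNorm T = 1 ∧ r = nucNorm T}

/-- `β(n, 𝕜)`: the minimal spectral norm of a tensor of Hilbert–Schmidt norm one. -/
def betaN (𝕜 : Type*) [RCLike 𝕜] (d : ℕ) (n : Fin d → ℕ) : ℝ :=
  sInf {r : ℝ | ∃ T : (∀ j, Fin (n j)) → 𝕜, hsNorm T = 1 ∧ r = specNorm T}

abbrev Tensor (𝕜 : Type*) {d : ℕ} (n : Fin d → ℕ) : Type _ := (∀ j, Fin (n j)) → 𝕜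

section
variable {𝕜 : Type*} [RCLike 𝕜] {d : ℕ} {n : Fin d → ℕ}

open scoped InnerProductSpace Pointwise

lemma vnorm_eq_norm_toLp {k : ℕ} (x : Fin k → 𝕜) :
    vnorm x = ‖(WithLp.toLp 2 x : EuclideanSpace 𝕜 (Fin k))‖ := by
  rw [EuclideanSpace.norm_eq]; rfl

lemma hsNorm_eq_norm_toLp (T : Tensor 𝕜 n) :
    hsNorm T = ‖(WithLp.toLp 2 T : EuclideanSpace 𝕜 (∀ j, Fin (n j)))‖ := by
  rw [EuclideanSpace.norm_eq]; rfl

lemma tinner_eq_inner (T Y : Tensor 𝕜 n) :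
    tinner T Y = ⟪(WithLp.toLp 2 Y : EuclideanSpace 𝕜 (∀ j, Fin (n j))), WithLp.toLp 2 T⟫_𝕜 := by
  simp [tinner, PiLp.inner_apply]

lemma vnorm_nonneg {k : ℕ} (x : Fin k → 𝕜) : 0 ≤ vnorm x := Real.sqrt_nonneg _

lemma vnorm_single_one {k : ℕ} (l : Fin k) : vnorm (Pi.single l (1 : 𝕜)) = 1 := by
  simp [vnorm, Pi.single_apply, apply_ite]

lemma vnorm_smul {k : ℕ} (c : 𝕜) (x : Fin k → 𝕜) : vnorm (c • x) = ‖c‖ * vnorm x := by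
  rw [vnorm_eq_norm_toLp, vnorm_eq_norm_toLp, ← norm_smul, WithLp.toLp_smul]

lemma hsNorm_nonneg (T : Tensor 𝕜 n) : 0 ≤ hsNorm T := Real.sqrt_nonneg _

lemma hsNorm_smul (c : 𝕜) (T : Tensor 𝕜 n) : hsNorm (c • T) = ‖c‖ * hsNorm T := by
  rw [hsNorm_eq_norm_toLp, hsNorm_eq_norm_toLp, ← norm_smul, WithLp.toLp_smul]

lemma norm_apply_le_hsNorm (T : Tensor 𝕜 n) (i : ∀ j, Fin (n j)) : ‖T i‖ ≤ hsNorm T := by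
  rw [hsNorm_eq_norm_toLp]; exact PiLp.norm_apply_le (WithLp.toLp 2 T) i

lemma norm_tinner_le (T Y : Tensor 𝕜 n) : ‖tinner T Y‖ ≤ hsNorm T * hsNorm Y := by
  rw [tinner_eq_inner, hsNorm_eq_norm_toLp, hsNorm_eq_norm_toLp, mul_comm]
  exact norm_inner_le_norm _ _

lemma norm_tinner_self (T : Tensor 𝕜 n) : ‖tinner T T‖ = hsNorm T ^ 2 := by
  rw [tinner_eq_inner, inner_self_eq_norm_sq_to_K, hsNorm_eq_norm_toLp, norm_pow,
    RCLike.norm_ofReal, abs_norm]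

lemma conj_tinner (T Y : Tensor 𝕜 n) : starRingEnd 𝕜 (tinner T Y) = tinner Y T := by
  simp [tinner, map_sum, mul_comm]

lemma tinner_smul_left (c : 𝕜) (T Y : Tensor 𝕜 n) : tinner (c • T) Y = c * tinner T Y := by
  simp [tinner, Finset.mul_sum, mul_assoc]

lemma tinner_smul_right (c : 𝕜) (T Y : Tensor 𝕜 n) :
    tinner T (c • Y) = starRingEnd 𝕜 c * tinner T Y := by
  simp [tinner, Finset.mul_sum, mul_left_comm]

lemma tinner_sum_left {ι : Type*} (s : Finset ι) (A : ι → Tensor 𝕜 n) (Y : Tensor 𝕜 n) :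
    tinner (∑ k ∈ s, A k) Y = ∑ k ∈ s, tinner (A k) Y := by
  simp only [tinner, Finset.sum_apply, Finset.sum_mul]
  exact Finset.sum_comm

lemma rankOne_smul (c : Fin d → 𝕜) (x : ∀ j, Fin (n j) → 𝕜) :
    rankOne (fun j => c j • x j) = (∏ j, c j) • rankOne x := by
  funext i; simp [rankOne, Finset.prod_mul_distrib]

lemma hsNorm_rankOne (x : ∀ j, Fin (n j) → 𝕜) : hsNorm (rankOne x) = ∏ j, vnorm (x j) := by
  have hsq : ∑ i, ‖rankOne x i‖ ^ 2 = ∏ j, ∑ l, ‖x j l‖ ^ 2 := by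
    rw [Finset.prod_univ_sum, Fintype.piFinset_univ]
    simp [rankOne, Finset.prod_pow]
  rw [hsNorm, hsq, Real.sqrt_prod _ fun j _ => by positivity]
  rfl

lemma exists_vnorm_eq_one_smul {k : ℕ} (hk : 0 < k) (x : Fin k → 𝕜) :
    ∃ y, vnorm y = 1 ∧ x = (vnorm x : 𝕜) • y := by
  by_cases hx : x = 0
  · exact ⟨Pi.single ⟨0, hk⟩ 1, vnorm_single_one _, by simp [hx, vnorm]⟩
  · have hx' : vnorm x ≠ 0 := by
      rwa [vnorm_eq_norm_toLp, norm_ne_zero_iff, ne_eq, WithLp.toLp_eq_zero]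
    refine ⟨(vnorm x : 𝕜)⁻¹ • x, ?_, ?_⟩
    · rw [vnorm_smul, norm_inv, RCLike.norm_ofReal, abs_of_nonneg (vnorm_nonneg x),
        inv_mul_cancel₀ hx']
    · rw [smul_inv_smul₀ (by exact_mod_cast hx')]

lemma rankOne_single_one (i : ∀ j, Fin (n j)) :
    rankOne (n := n) (fun j => Pi.single (i j) (1 : 𝕜)) = Pi.single i 1 := by
  classical
  funext k
  simp [rankOne, Pi.single_apply, Finset.prod_boole, funext_iff]

lemma exists_forall_vnorm_eq_one (hn : ∀ j, 1 ≤ n j) :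
    ∃ x : ∀ j, Fin (n j) → 𝕜, ∀ j, vnorm (x j) = 1 :=
  ⟨fun j => Pi.single ⟨0, hn j⟩ 1, fun _ => vnorm_single_one _⟩

lemma exists_hsNorm_eq_one (hn : ∀ j, 1 ≤ n j) : ∃ T : Tensor 𝕜 n, hsNorm T = 1 := by
  obtain ⟨x, hx⟩ := exists_forall_vnorm_eq_one (𝕜 := 𝕜) hn
  exact ⟨rankOne x, by simp [hsNorm_rankOne, hx]⟩

lemma norm_tinner_rankOne_le_specNorm (T : Tensor 𝕜 n) {x : ∀ j, Fin (n j) → 𝕜}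
    (hx : ∀ j, vnorm (x j) = 1) : ‖tinner T (rankOne x)‖ ≤ specNorm T := by
  refine le_csSup ⟨hsNorm T, ?_⟩ ⟨x, hx, rfl⟩
  rintro _ ⟨y, hy, rfl⟩
  simpa [hsNorm_rankOne, hy] using norm_tinner_le T (rankOne y)

lemma specNorm_le (hn : ∀ j, 1 ≤ n j) {T : Tensor 𝕜 n} {c : ℝ}
    (h : ∀ x : ∀ j, Fin (n j) → 𝕜, (∀ j, vnorm (x j) = 1) → ‖tinner T (rankOne x)‖ ≤ c) :
    specNorm T ≤ c := by
  obtain ⟨x, hx⟩ := exists_forall_vnorm_eq_one (𝕜 := 𝕜) hn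
  refine csSup_le ⟨_, x, hx, rfl⟩ ?_
  rintro _ ⟨y, hy, rfl⟩
  exact h y hy

lemma specNorm_nonneg (hn : ∀ j, 1 ≤ n j) (T : Tensor 𝕜 n) : 0 ≤ specNorm T := by
  obtain ⟨x, hx⟩ := exists_forall_vnorm_eq_one (𝕜 := 𝕜) hn
  exact (norm_nonneg _).trans (norm_tinner_rankOne_le_specNorm T hx)

lemma specNorm_smul (c : 𝕜) (T : Tensor 𝕜 n) : specNorm (c • T) = ‖c‖ * specNorm T := by
  have hset : {r : ℝ | ∃ x : ∀ j, Fin (n j) → 𝕜, (∀ j, vnorm (x j) = 1) ∧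
        r = ‖tinner (c • T) (rankOne x)‖} =
      ‖c‖ • {r : ℝ | ∃ x : ∀ j, Fin (n j) → 𝕜, (∀ j, vnorm (x j) = 1) ∧
        r = ‖tinner T (rankOne x)‖} := by
    ext r
    simp [Set.mem_smul_set, tinner_smul_left, eq_comm]
  rw [specNorm, specNorm, hset, Real.sSup_smul_of_nonneg (norm_nonneg c), smul_eq_mul]

lemma norm_tinner_rankOne_le (hn : ∀ j, 1 ≤ n j) (T : Tensor 𝕜 n) (x : ∀ j, Fin (n j) → 𝕜) :
    ‖tinner T (rankOne x)‖ ≤ specNorm T * ∏ j, vnorm (x j) := by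
  choose y hy hxy using fun j => exists_vnorm_eq_one_smul (hn j) (x j)
  have hx : rankOne x = (∏ j, (vnorm (x j) : 𝕜)) • rankOne y := by
    rw [← rankOne_smul]
    exact congrArg rankOne (funext hxy)
  have hprod : 0 ≤ ∏ j, vnorm (x j) := Finset.prod_nonneg fun j _ => vnorm_nonneg _
  rw [hx, tinner_smul_right, norm_mul, RCLike.norm_conj, ← RCLike.ofReal_prod,
    RCLike.norm_ofReal, abs_of_nonneg hprod, mul_comm]
  exact mul_le_mul_of_nonneg_right (norm_tinner_rankOne_le_specNorm T hy) hprod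

def rankOneCosts (T : Tensor 𝕜 n) : Set ℝ :=
  {r : ℝ | ∃ (m : ℕ) (x : Fin m → ∀ j, Fin (n j) → 𝕜),
    T = (∑ i, rankOne (x i)) ∧ r = ∑ i, ∏ j, vnorm (x i j)}

lemma nucNorm_eq_sInf (T : Tensor 𝕜 n) : nucNorm T = sInf (rankOneCosts T) := rfl

lemma bddBelow_rankOneCosts (T : Tensor 𝕜 n) : BddBelow (rankOneCosts T) := by
  refine ⟨0, ?_⟩
  rintro _ ⟨m, x, -, rfl⟩
  exact Finset.sum_nonneg fun i _ => Finset.prod_nonneg fun j _ => vnorm_nonneg _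

lemma nucNorm_le_of_mem {T : Tensor 𝕜 n} {r : ℝ} (hr : r ∈ rankOneCosts T) : nucNorm T ≤ r :=
  csInf_le (bddBelow_rankOneCosts T) hr

lemma prod_vnorm_mem_rankOneCosts (x : ∀ j, Fin (n j) → 𝕜) :
    ∏ j, vnorm (x j) ∈ rankOneCosts (rankOne x) :=
  ⟨1, fun _ => x, by simp, by simp⟩

lemma zero_mem_rankOneCosts_zero : (0 : ℝ) ∈ rankOneCosts (0 : Tensor 𝕜 n) :=
  ⟨0, Fin.elim0, by simp, by simp⟩

lemma add_mem_rankOneCosts {A B : Tensor 𝕜 n} {r s : ℝ} (hr : r ∈ rankOneCosts A)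
    (hs : s ∈ rankOneCosts B) : r + s ∈ rankOneCosts (A + B) := by
  obtain ⟨m, x, rfl, rfl⟩ := hr
  obtain ⟨m', y, rfl, rfl⟩ := hs
  exact ⟨m + m', Fin.append x y, by simp [Fin.sum_univ_add], by simp [Fin.sum_univ_add]⟩

lemma sum_mem_rankOneCosts {ι : Type*} (s : Finset ι) {A : ι → Tensor 𝕜 n} {r : ι → ℝ}
    (h : ∀ i ∈ s, r i ∈ rankOneCosts (A i)) : ∑ i ∈ s, r i ∈ rankOneCosts (∑ i ∈ s, A i) := by
  classical
  induction s using Finset.induction_on with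
  | empty => simpa using zero_mem_rankOneCosts_zero
  | insert i s hi ih =>
    rw [Finset.sum_insert hi, Finset.sum_insert hi]
    exact add_mem_rankOneCosts (h i (Finset.mem_insert_self i s))
      (ih fun k hk => h k (Finset.mem_insert_of_mem hk))

lemma mul_mem_rankOneCosts_smul (hd : 0 < d) (c : 𝕜) {A : Tensor 𝕜 n} {r : ℝ}
    (hr : r ∈ rankOneCosts A) : ‖c‖ * r ∈ rankOneCosts (c • A) := by
  obtain ⟨m, x, rfl, rfl⟩ := hr
  -- scale the first factor of every rank-one term
  set a : Fin d → 𝕜 := fun j => if j = ⟨0, hd⟩ then c else 1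
  have ha : ∏ j, a j = c := by simp [a]
  have ha' : ∏ j, ‖a j‖ = ‖c‖ := by simp [a, apply_ite]
  refine ⟨m, fun i j => a j • x i j, ?_, ?_⟩
  · simp [rankOne_smul, ha, Finset.smul_sum]
  · simp [vnorm_smul, Finset.prod_mul_distrib, ha', Finset.mul_sum]

lemma sum_norm_mem_rankOneCosts (hd : 0 < d) (T : Tensor 𝕜 n) :
    ∑ i, ‖T i‖ ∈ rankOneCosts T := by
  classical
  have hT : T = ∑ i, T i • rankOne (n := n) (fun j => Pi.single (i j) (1 : 𝕜)) := by
    ext k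
    simp [rankOne_single_one, Pi.single_apply]
  have h := sum_mem_rankOneCosts Finset.univ (r := fun i => ‖T i‖) fun i _ => by
    simpa [vnorm_single_one] using
      mul_mem_rankOneCosts_smul hd (T i) (prod_vnorm_mem_rankOneCosts (n := n)
        (fun j => Pi.single (i j) (1 : 𝕜)))
  rwa [← hT] at h

lemma rankOneCosts_nonempty (hd : 0 < d) (T : Tensor 𝕜 n) : (rankOneCosts T).Nonempty :=
  ⟨_, sum_norm_mem_rankOneCosts hd T⟩

lemma nucNorm_add_le (hd : 0 < d) (A B : Tensor 𝕜 n) :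
    nucNorm (A + B) ≤ nucNorm A + nucNorm B := by
  rw [nucNorm_eq_sInf, nucNorm_eq_sInf, nucNorm_eq_sInf,
    ← csInf_add (rankOneCosts_nonempty hd A) (bddBelow_rankOneCosts A)
      (rankOneCosts_nonempty hd B) (bddBelow_rankOneCosts B)]
  refine csInf_le_csInf (bddBelow_rankOneCosts _)
    ((rankOneCosts_nonempty hd A).add (rankOneCosts_nonempty hd B)) ?_
  rintro _ ⟨r, hr, s, hs, rfl⟩
  exact add_mem_rankOneCosts hr hs

lemma nucNorm_smul_le (hd : 0 < d) (c : 𝕜) (A : Tensor 𝕜 n) :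
    nucNorm (c • A) ≤ ‖c‖ * nucNorm A := by
  rw [nucNorm_eq_sInf, nucNorm_eq_sInf, ← smul_eq_mul,
    ← Real.sInf_smul_of_nonneg (norm_nonneg c)]
  refine csInf_le_csInf (bddBelow_rankOneCosts _) ((rankOneCosts_nonempty hd A).smul_set) ?_
  rintro _ ⟨r, hr, rfl⟩
  exact mul_mem_rankOneCosts_smul hd c hr

lemma convexOn_nucNorm (hd : 0 < d) : ConvexOn ℝ Set.univ (nucNorm : Tensor 𝕜 n → ℝ) := by
  refine ⟨convex_univ, fun A _ B _ a b ha hb _ => ?_⟩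
  have hsmul : ∀ {t : ℝ} (Y : Tensor 𝕜 n), 0 ≤ t → nucNorm (t • Y) ≤ t * nucNorm Y := by
    intro t Y ht
    have h := nucNorm_smul_le hd (t : 𝕜) Y
    rwa [← RCLike.real_smul_eq_coe_smul, RCLike.norm_ofReal, abs_of_nonneg ht] at h
  calc nucNorm (a • A + b • B) ≤ nucNorm (a • A) + nucNorm (b • B) := nucNorm_add_le hd _ _
    _ ≤ a • nucNorm A + b • nucNorm B := add_le_add (hsmul A ha) (hsmul B hb)

lemma continuous_nucNorm (hd : 0 < d) : Continuous (nucNorm : Tensor 𝕜 n → ℝ) :=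
  (convexOn_nucNorm hd).locallyLipschitz.continuous

lemma nucNorm_le_sum_norm (hd : 0 < d) (T : Tensor 𝕜 n) : nucNorm T ≤ ∑ i, ‖T i‖ :=
  nucNorm_le_of_mem (sum_norm_mem_rankOneCosts hd T)

lemma norm_tinner_le_nucNorm_mul_specNorm (hn : ∀ j, 1 ≤ n j) (hd : 0 < d) (T Y : Tensor 𝕜 n) :
    ‖tinner T Y‖ ≤ nucNorm T * specNorm Y := by
  rw [mul_comm, nucNorm_eq_sInf, ← smul_eq_mul,
    ← Real.sInf_smul_of_nonneg (specNorm_nonneg hn Y)]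
  refine le_csInf (rankOneCosts_nonempty hd T).smul_set ?_
  rintro _ ⟨_, ⟨m, x, rfl, rfl⟩, rfl⟩
  dsimp only [smul_eq_mul]
  rw [tinner_sum_left, Finset.mul_sum]
  refine (norm_sum_le _ _).trans (Finset.sum_le_sum fun k _ => ?_)
  rw [← conj_tinner, RCLike.norm_conj]
  exact norm_tinner_rankOne_le hn Y (x k)

lemma exists_tinner_eq (f : Tensor 𝕜 n →ₗ[𝕜] 𝕜) : ∃ Z : Tensor 𝕜 n, ∀ Y, f Y = tinner Y Z := by
  classical
  refine ⟨fun i => starRingEnd 𝕜 (f fun k => if i = k then 1 else 0), fun Y => ?_⟩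
  rw [f.pi_apply_eq_sum_univ Y]
  simp [tinner]

lemma exists_specNorm_le_one_lt_re_tinner (hn : ∀ j, 1 ≤ n j) (hd : 0 < d) {T : Tensor 𝕜 n}
    {r : ℝ} (hr : 0 < r) (hT : r < nucNorm T) :
    ∃ W : Tensor 𝕜 n, specNorm W ≤ 1 ∧ r < RCLike.re (tinner T W) := by
  set K := {Y : Tensor 𝕜 n | nucNorm Y ≤ r}
  have hKconvex : Convex ℝ K := by simpa using (convexOn_nucNorm hd).convex_le r
  have hKclosed : IsClosed K := isClosed_le (continuous_nucNorm hd) continuous_const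
  obtain ⟨f, u, hfK, hfT⟩ :=
    RCLike.geometric_hahn_banach_closed_point (𝕜 := 𝕜) hKconvex hKclosed hT.not_ge
  obtain ⟨Z, hZ⟩ := exists_tinner_eq f.toLinearMap
  simp only [ContinuousLinearMap.coe_coe] at hZ
  have hu : 0 < u := by
    simpa using hfK 0 ((nucNorm_le_of_mem zero_mem_rankOneCosts_zero).trans hr.le)
  have hZspec : specNorm Z ≤ u / r := by
    refine specNorm_le hn fun x hx => ?_
    -- the phase `c` makes `r c • rankOne x ∈ K` pair with `Z` to `r ‖⟨Z, rankOne x⟩‖`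
    obtain ⟨c, hc, hct⟩ := RCLike.exists_norm_eq_mul_self (tinner (rankOne x) Z)
    have hmem : ((r : 𝕜) * c) • rankOne x ∈ K := by
      refine (nucNorm_smul_le hd _ _).trans ?_
      rw [norm_mul, hc, RCLike.norm_ofReal, abs_of_pos hr, mul_one]
      calc r * nucNorm (rankOne x) ≤ r * 1 := by
            refine mul_le_mul_of_nonneg_left ?_ hr.le
            simpa [hx] using nucNorm_le_of_mem (prod_vnorm_mem_rankOneCosts x)
        _ = r := mul_one r
    have h := hfK _ hmem
    rw [hZ, tinner_smul_left, mul_assoc, ← hct, ← RCLike.ofReal_mul, RCLike.ofReal_re,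
      ← conj_tinner, RCLike.norm_conj] at h
    rw [le_div_iff₀ hr, mul_comm]
    exact h.le
  refine ⟨((r / u : ℝ) : 𝕜) • Z, ?_, ?_⟩
  · rw [specNorm_smul, RCLike.norm_ofReal, abs_of_pos (by positivity)]
    calc r / u * specNorm Z ≤ r / u * (u / r) :=
          mul_le_mul_of_nonneg_left hZspec (by positivity)
      _ = 1 := by field_simp
  · rw [tinner_smul_right, RCLike.conj_ofReal, RCLike.re_ofReal_mul]
    rw [hZ] at hfT
    calc r = r / u * u := by field_simp
      _ < r / u * RCLike.re (tinner T Z) := mul_lt_mul_of_pos_left hfT (by positivity)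

lemma one_le_nucNorm_mul_specNorm (hn : ∀ j, 1 ≤ n j) (hd : 0 < d) {T : Tensor 𝕜 n}
    (hT : hsNorm T = 1) : 1 ≤ nucNorm T * specNorm T := by
  simpa [norm_tinner_self, hT] using norm_tinner_le_nucNorm_mul_specNorm hn hd T T

lemma nucNorm_le_card_mul_hsNorm (hd : 0 < d) (T : Tensor 𝕜 n) :
    nucNorm T ≤ Fintype.card (∀ j, Fin (n j)) * hsNorm T :=
  calc nucNorm T ≤ ∑ i, ‖T i‖ := nucNorm_le_sum_norm hd T
    _ ≤ ∑ _i, hsNorm T := Finset.sum_le_sum fun i _ => norm_apply_le_hsNorm T i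
    _ = Fintype.card (∀ j, Fin (n j)) * hsNorm T := by simp

lemma nucNorm_le_alphaN (hd : 0 < d) {T : Tensor 𝕜 n} (hT : hsNorm T = 1) :
    nucNorm T ≤ alphaN 𝕜 d n := by
  refine le_csSup ⟨Fintype.card (∀ j, Fin (n j)), ?_⟩ ⟨T, hT, rfl⟩
  rintro _ ⟨S, hS, rfl⟩
  simpa [hS] using nucNorm_le_card_mul_hsNorm hd S

lemma betaN_le_specNorm (hn : ∀ j, 1 ≤ n j) {T : Tensor 𝕜 n} (hT : hsNorm T = 1) :
    betaN 𝕜 d n ≤ specNorm T := by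
  refine csInf_le ⟨0, ?_⟩ ⟨T, hT, rfl⟩
  rintro _ ⟨S, -, rfl⟩
  exact specNorm_nonneg hn S

lemma betaN_mul_hsNorm_le_specNorm (hn : ∀ j, 1 ≤ n j) (W : Tensor 𝕜 n) :
    betaN 𝕜 d n * hsNorm W ≤ specNorm W := by
  rcases (hsNorm_nonneg W).eq_or_lt with h | h
  · rw [← h, mul_zero]
    exact specNorm_nonneg hn W
  · have hW : hsNorm ((hsNorm W : 𝕜)⁻¹ • W) = 1 := by
      rw [hsNorm_smul, norm_inv, RCLike.norm_ofReal, abs_of_pos h, inv_mul_cancel₀ h.ne']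
    have hβ := betaN_le_specNorm hn hW
    rwa [specNorm_smul, norm_inv, RCLike.norm_ofReal, abs_of_pos h, ← div_eq_inv_mul,
      le_div_iff₀ h] at hβ

lemma alphaN_pos (hn : ∀ j, 1 ≤ n j) (hd : 0 < d) : 0 < alphaN 𝕜 d n := by
  obtain ⟨T, hT⟩ := exists_hsNorm_eq_one (𝕜 := 𝕜) hn
  have h1 := one_le_nucNorm_mul_specNorm hn hd hT
  have h2 := specNorm_nonneg hn T
  have hT_pos : 0 < nucNorm T := by nlinarith
  exact hT_pos.trans_le (nucNorm_le_alphaN hd hT)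

lemma inv_alphaN_le_betaN (hn : ∀ j, 1 ≤ n j) (hd : 0 < d) :
    (alphaN 𝕜 d n)⁻¹ ≤ betaN 𝕜 d n := by
  obtain ⟨T₀, hT₀⟩ := exists_hsNorm_eq_one (𝕜 := 𝕜) hn
  refine le_csInf ⟨_, T₀, hT₀, rfl⟩ ?_
  rintro _ ⟨T, hT, rfl⟩
  rw [inv_le_iff_one_le_mul₀' (alphaN_pos hn hd)]
  exact (one_le_nucNorm_mul_specNorm hn hd hT).trans
    (mul_le_mul_of_nonneg_right (nucNorm_le_alphaN hd hT) (specNorm_nonneg hn T))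

lemma alphaN_le_inv_betaN (hn : ∀ j, 1 ≤ n j) (hd : 0 < d) (hβ : 0 < betaN 𝕜 d n) :
    alphaN 𝕜 d n ≤ (betaN 𝕜 d n)⁻¹ := by
  obtain ⟨T₀, hT₀⟩ := exists_hsNorm_eq_one (𝕜 := 𝕜) hn
  refine csSup_le ⟨_, T₀, hT₀, rfl⟩ ?_
  rintro _ ⟨T, hT, rfl⟩
  by_contra! h
  obtain ⟨W, hW, hTW⟩ := exists_specNorm_le_one_lt_re_tinner hn hd (inv_pos.2 hβ) h
  have hWβ : hsNorm W ≤ (betaN 𝕜 d n)⁻¹ := by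
    rw [← one_div, le_div_iff₀ hβ, mul_comm]
    exact (betaN_mul_hsNorm_le_specNorm hn W).trans hW
  have hTW' : RCLike.re (tinner T W) ≤ (betaN 𝕜 d n)⁻¹ :=
    calc RCLike.re (tinner T W) ≤ ‖tinner T W‖ := RCLike.re_le_norm _
      _ ≤ hsNorm T * hsNorm W := norm_tinner_le T W
      _ = hsNorm W := by rw [hT, one_mul]
      _ ≤ (betaN 𝕜 d n)⁻¹ := hWβ
  exact hTW.not_ge hTW'

end

/-- For `d ≥ 3`, `α(n,𝕜)·β(n,𝕜) = 1`. -/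
theorem stmt2 (𝕜 : Type*) [RCLike 𝕜] (d : ℕ) (hd : 3 ≤ d) (n : Fin d → ℕ)
    (hn : ∀ j, 1 ≤ n j) :
    alphaN 𝕜 d n * betaN 𝕜 d n = 1 := by
  have hd₀ : 0 < d := by omega
  have hα := alphaN_pos (𝕜 := 𝕜) hn hd₀
  have hαβ := inv_alphaN_le_betaN (𝕜 := 𝕜) hn hd₀
  have hβ : 0 < betaN 𝕜 d n := (inv_pos.2 hα).trans_le hαβ
  have hβα := alphaN_le_inv_betaN hn hd₀ hβ
  have hβ_eq : betaN 𝕜 d n = (alphaN 𝕜 d n)⁻¹ := le_antisymm ((le_inv_comm₀ hα hβ).1 hβα) hαβ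
  rw [hβ_eq, mul_inv_cancel₀ hα.ne']
end
end

section
/- Let n ≥ 2 and F = ℝ or ℂ. Then α'(n,2,F) = √n and β'(n,2,F) = 1/√n. Moreover, if S is an n×n complex symmetric matrix (Sᵀ = S) with Frobenius norm ‖S‖ = 1, then ‖S‖₁ = √n if and only if √n·S is a unitary matrix. -/
noncomputable section


/-- The Frobenius (Hilbert–Schmidt) norm of a matrix. -/
def frobNorm {𝕜 : Type*} [RCLike 𝕜] {m n : ℕ} (T : Matrix (Fin m) (Fin n) 𝕜) : ℝ :=
  Real.sqrt (∑ i, ∑ j, ‖T i j‖ ^ 2)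

/-- The singular values of an `m × n` matrix: the square roots of the eigenvalues of
`T * Tᴴ`. -/
def singVals {𝕜 : Type*} [RCLike 𝕜] {m n : ℕ} (T : Matrix (Fin m) (Fin n) 𝕜) :
    Fin m → ℝ :=
  fun i => Real.sqrt ((Matrix.isHermitian_mul_conjTranspose_self T).eigenvalues i)

/-- The nuclear norm of a matrix: the sum of its singular values. -/
def nuclearNormM {𝕜 : Type*} [RCLike 𝕜] {m n : ℕ} (T : Matrix (Fin m) (Fin n) 𝕜) : ℝ :=
  ∑ i, singVals T i

/-- The spectral norm of a matrix: its largest singular value. -/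
def spectralNormM {𝕜 : Type*} [RCLike 𝕜] {m n : ℕ} (T : Matrix (Fin m) (Fin n) 𝕜) : ℝ :=
  ⨆ i, singVals T i

/-- `α'(n,2,𝕜)`: the maximal nuclear norm of a symmetric `n×n` matrix of Frobenius
norm one. -/
def alphaSymM (𝕜 : Type*) [RCLike 𝕜] (n : ℕ) : ℝ :=
  sSup {r : ℝ | ∃ S : Matrix (Fin n) (Fin n) 𝕜, S.transpose = S ∧ frobNorm S = 1 ∧
    r = nuclearNormM S}

/-- `β'(n,2,𝕜)`: the minimal spectral norm of a symmetric `n×n` matrix of Frobenius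
norm one. -/
def betaSymM (𝕜 : Type*) [RCLike 𝕜] (n : ℕ) : ℝ :=
  sInf {r : ℝ | ∃ S : Matrix (Fin n) (Fin n) 𝕜, S.transpose = S ∧ frobNorm S = 1 ∧
    r = spectralNormM S}

/-! The squared singular values of `S` are the eigenvalues of `S * Sᴴ`, so they sum to
`‖S‖² = 1`. By Cauchy–Schwarz their sum is at most `√n` and their maximum at least `1/√n`;
both bounds are attained exactly when all singular values equal `1/√n`, i.e. when
`S * Sᴴ = (1/n) • 1`, i.e. when `√n • S` is unitary. The symmetric matrix `(1/√n) • 1`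
is such a matrix. -/

open Matrix

lemma eq_inv_sqrt_card_of_sum_eq_sqrt_card {ι : Type*} [Fintype ι] {f : ι → ℝ}
    (hsq : ∑ i, f i ^ 2 = 1) (hsum : ∑ i, f i = √(Fintype.card ι)) (i : ι) :
    f i = (√(Fintype.card ι))⁻¹ := by
  set N : ℝ := (Fintype.card ι : ℝ)
  have hN : 0 < N := Nat.cast_pos.mpr (Fintype.card_pos_iff.mpr ⟨i⟩)
  have hsqrt : √N ≠ 0 := (Real.sqrt_pos.mpr hN).ne'
  have hdev : ∑ j, (f j - (√N)⁻¹) ^ 2 = 0 := by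
    simp only [sub_sq, Finset.sum_add_distrib, Finset.sum_sub_distrib, ← Finset.sum_mul,
      ← Finset.mul_sum, hsq, hsum, Finset.sum_const, Finset.card_univ, nsmul_eq_mul]
    field_simp
    rw [Real.sq_sqrt hN.le]
    ring
  rw [Finset.sum_eq_zero_iff_of_nonneg fun j _ => sq_nonneg _] at hdev
  exact sub_eq_zero.mp (pow_eq_zero_iff two_ne_zero |>.mp (hdev i (Finset.mem_univ i)))

section SingularValues

variable {𝕜 : Type*} [RCLike 𝕜] {m n : ℕ}

lemma trace_mul_conjTranspose_eq_sum_norm_sq (T : Matrix (Fin m) (Fin n) 𝕜) :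
    (T * Tᴴ).trace = ((∑ i, ∑ j, ‖T i j‖ ^ 2 : ℝ) : 𝕜) := by
  simp only [Matrix.trace, diag_apply, mul_apply, conjTranspose_apply, RCLike.star_def,
    RCLike.mul_conj]
  push_cast
  rfl

lemma frobNorm_nonneg (T : Matrix (Fin m) (Fin n) 𝕜) : 0 ≤ frobNorm T :=
  Real.sqrt_nonneg _

lemma singVals_nonneg (T : Matrix (Fin m) (Fin n) 𝕜) (i : Fin m) : 0 ≤ singVals T i :=
  Real.sqrt_nonneg _

lemma sq_singVals (T : Matrix (Fin m) (Fin n) 𝕜) (i : Fin m) :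
    singVals T i ^ 2 = (isHermitian_mul_conjTranspose_self T).eigenvalues i :=
  Real.sq_sqrt (eigenvalues_self_mul_conjTranspose_nonneg T i)

lemma sum_sq_singVals (T : Matrix (Fin m) (Fin n) 𝕜) :
    ∑ i, singVals T i ^ 2 = frobNorm T ^ 2 := by
  have htrace := (isHermitian_mul_conjTranspose_self T).trace_eq_sum_eigenvalues
  rw [trace_mul_conjTranspose_eq_sum_norm_sq] at htrace
  rw [frobNorm, Real.sq_sqrt (by positivity)]
  simp_rw [sq_singVals]
  exact_mod_cast htrace.symm

lemma nuclearNormM_le_sqrt_mul_frobNorm (T : Matrix (Fin m) (Fin n) 𝕜) :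
    nuclearNormM T ≤ √m * frobNorm T := by
  refine le_of_pow_le_pow_left₀ two_ne_zero (by have := frobNorm_nonneg T; positivity) ?_
  calc nuclearNormM T ^ 2 ≤ m * ∑ i, singVals T i ^ 2 := by
        simpa [nuclearNormM] using sq_sum_le_card_mul_sum_sq (s := Finset.univ) (f := singVals T)
    _ = (√m * frobNorm T) ^ 2 := by
        rw [sum_sq_singVals, mul_pow, Real.sq_sqrt (Nat.cast_nonneg m)]

lemma frobNorm_le_sqrt_mul_spectralNormM (T : Matrix (Fin m) (Fin n) 𝕜) :
    frobNorm T ≤ √m * spectralNormM T := by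
  have hspec : 0 ≤ spectralNormM T := Real.iSup_nonneg (singVals_nonneg T)
  refine le_of_pow_le_pow_left₀ two_ne_zero (by positivity) ?_
  calc frobNorm T ^ 2 = ∑ i, singVals T i ^ 2 := (sum_sq_singVals T).symm
    _ ≤ ∑ _i : Fin m, spectralNormM T ^ 2 := by
        gcongr with i
        · exact singVals_nonneg T i
        · exact le_ciSup (Set.finite_range _).bddAbove i
    _ = (√m * spectralNormM T) ^ 2 := by
        rw [Finset.sum_const, Finset.card_univ, Fintype.card_fin, nsmul_eq_mul, mul_pow,
          Real.sq_sqrt (Nat.cast_nonneg m)]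

lemma nuclearNormM_eq_of_singVals_eq {T : Matrix (Fin m) (Fin n) 𝕜} {c : ℝ}
    (h : ∀ i, singVals T i = c) : nuclearNormM T = m * c := by
  simp [nuclearNormM, h]

lemma spectralNormM_eq_of_singVals_eq [NeZero m] {T : Matrix (Fin m) (Fin n) 𝕜} {c : ℝ}
    (h : ∀ i, singVals T i = c) : spectralNormM T = c := by
  simp [spectralNormM, h]

lemma forall_singVals_eq_iff {T : Matrix (Fin m) (Fin n) 𝕜} {c : ℝ} (hc : 0 ≤ c) :
    (∀ i, singVals T i = c) ↔ T * Tᴴ = ((c ^ 2 : ℝ) : 𝕜) • (1 : Matrix (Fin m) (Fin m) 𝕜) := by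
  have hH := isHermitian_mul_conjTranspose_self T
  constructor
  · intro h
    have hdiag : diagonal (RCLike.ofReal ∘ hH.eigenvalues) =
        ((c ^ 2 : ℝ) : 𝕜) • (1 : Matrix (Fin m) (Fin m) 𝕜) := by
      rw [smul_one_eq_diagonal]
      congr with i
      simp [← sq_singVals, h i]
    rw [hH.spectral_theorem, hdiag, map_smul, map_one]
  · intro h i
    have : Nonempty (Fin m) := ⟨i⟩
    have hspec :
        hH.eigenvalues i ∈ spectrum ℝ (algebraMap ℝ (Matrix (Fin m) (Fin m) 𝕜) (c ^ 2)) := by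
      rw [Algebra.algebraMap_eq_smul_one, RCLike.real_smul_eq_coe_smul (K := 𝕜), ← h]
      exact hH.eigenvalues_mem_spectrum_real i
    rw [spectrum.scalar_eq, Set.mem_singleton_iff] at hspec
    rw [singVals, hspec, Real.sqrt_sq hc]

lemma nuclearNormM_eq_sqrt_iff {T : Matrix (Fin m) (Fin n) 𝕜} (hT : frobNorm T = 1) :
    nuclearNormM T = √m ↔ ∀ i, singVals T i = (√m)⁻¹ := by
  refine ⟨fun h i => ?_, fun h => ?_⟩
  · simpa using eq_inv_sqrt_card_of_sum_eq_sqrt_card (f := singVals T)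
      (by rw [sum_sq_singVals, hT, one_pow]) (by rw [Fintype.card_fin]; exact h) i
  · rw [nuclearNormM_eq_of_singVals_eq h, ← div_eq_mul_inv, Real.div_sqrt]

lemma smul_mem_unitaryGroup_iff {T : Matrix (Fin n) (Fin n) 𝕜} {c : ℝ} (hc : c ≠ 0) :
    (c : 𝕜) • T ∈ unitaryGroup (Fin n) 𝕜 ↔
      T * Tᴴ = ((c⁻¹ ^ 2 : ℝ) : 𝕜) • (1 : Matrix (Fin n) (Fin n) 𝕜) := by
  have hc2 : ((c ^ 2 : ℝ) : 𝕜) ≠ 0 := by exact_mod_cast pow_ne_zero 2 hc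
  rw [mem_unitaryGroup_iff, star_eq_conjTranspose, conjTranspose_smul, RCLike.star_def,
    RCLike.conj_ofReal, smul_mul_smul_comm, ← RCLike.ofReal_mul, ← sq, inv_pow,
    RCLike.ofReal_inv, eq_inv_smul_iff₀ hc2]

lemma exists_transpose_eq_frobNorm_eq_one_singVals_eq [NeZero n] :
    ∃ W : Matrix (Fin n) (Fin n) 𝕜, Wᵀ = W ∧ frobNorm W = 1 ∧ ∀ i, singVals W i = (√n)⁻¹ := by
  have hsqrt : √(n : ℝ) ≠ 0 := (Real.sqrt_pos.mpr (by exact_mod_cast NeZero.pos n)).ne'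
  set W : Matrix (Fin n) (Fin n) 𝕜 := (((√n)⁻¹ : ℝ) : 𝕜) • 1
  have hW : ∀ i, singVals W i = (√n)⁻¹ := by
    rw [forall_singVals_eq_iff (by positivity), ← smul_mem_unitaryGroup_iff hsqrt, smul_smul,
      ← RCLike.ofReal_mul, mul_inv_cancel₀ hsqrt, RCLike.ofReal_one, one_smul]
    exact one_mem _
  refine ⟨W, by simp [W], ?_, hW⟩
  rw [← pow_eq_one_iff_of_nonneg (frobNorm_nonneg W) two_ne_zero, ← sum_sq_singVals]
  simp [hW, Real.sq_sqrt, NeZero.ne]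

end SingularValues

/-- `α'(n,2,𝕜) = √n` and `β'(n,2,𝕜) = 1/√n`; moreover for a complex
symmetric `n×n` matrix `S` with `‖S‖ = 1`, `‖S‖₁ = √n` iff `√n · S` is unitary. -/
theorem stmt6 (𝕜 : Type*) [RCLike 𝕜] (n : ℕ) (hn : 2 ≤ n) :
    alphaSymM 𝕜 n = Real.sqrt n ∧ betaSymM 𝕜 n = 1 / Real.sqrt n ∧
    ∀ S : Matrix (Fin n) (Fin n) ℂ, S.transpose = S → frobNorm S = 1 →
      (nuclearNormM S = Real.sqrt n ↔
        ((Real.sqrt n : ℂ) • S) ∈ Matrix.unitaryGroup (Fin n) ℂ) := by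
  have : NeZero n := ⟨by omega⟩
  have hsqrt : 0 < √(n : ℝ) := Real.sqrt_pos.mpr (by exact_mod_cast NeZero.pos n)
  obtain ⟨W, hWt, hWf, hW⟩ := exists_transpose_eq_frobNorm_eq_one_singVals_eq (𝕜 := 𝕜) (n := n)
  refine ⟨?_, ?_, fun S _ hS => ?_⟩
  · refine IsGreatest.csSup_eq ⟨⟨W, hWt, hWf, ((nuclearNormM_eq_sqrt_iff hWf).mpr hW).symm⟩, ?_⟩
    rintro _ ⟨S, -, hS, rfl⟩
    simpa [hS] using nuclearNormM_le_sqrt_mul_frobNorm S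
  · refine IsLeast.csInf_eq ⟨⟨W, hWt, hWf, by rw [spectralNormM_eq_of_singVals_eq hW, one_div]⟩, ?_⟩
    rintro _ ⟨S, -, hS, rfl⟩
    rw [div_le_iff₀' hsqrt, ← hS]
    exact frobNorm_le_sqrt_mul_spectralNormM S
  · rw [nuclearNormM_eq_sqrt_iff hS, forall_singVals_eq_iff (by positivity)]
    exact (smul_mem_unitaryGroup_iff hsqrt.ne').symm
end
end
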